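/- arXiv:2503.00773 — 3 statements merged into one kernel-verified Lean document; each statement's English description precedes it below -/
import Mathlib

section
/- Let G be a finite abelian p-group, H̃_2(G) = (G⊗G)/⟨g⊗h+h⊗g⟩, and HC_1 = (G ⊗_Z Z_p[G])/⟨g ⊗ λg⟩. Define ω₂: HC_1 → H̃_2(G) on generators by ω₂(g ⊗ λh) = λ̄·(g ⊗̃ g^{-1}h), where λ̄ is the reduction of λ ∈ Z_p modulo the exponent of G. Then ω₂ is a well-defined surjective group homomorphism. -/
open TensorProduct

/-- `H̃₂(G) = (G ⊗_ℤ G)/⟨g⊗h + h⊗g⟩`. -/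
def Htilde2 (G : Type) [CommGroup G] : Type :=
  (Additive G ⊗[ℤ] Additive G) ⧸
    AddSubgroup.closure
      {x : Additive G ⊗[ℤ] Additive G |
        ∃ a b : G,
          x = Additive.ofMul a ⊗ₜ[ℤ] Additive.ofMul b
                + Additive.ofMul b ⊗ₜ[ℤ] Additive.ofMul a}

noncomputable instance (G : Type) [CommGroup G] : AddCommGroup (Htilde2 G) :=
  inferInstanceAs (AddCommGroup ((Additive G ⊗[ℤ] Additive G) ⧸ _))

/-- `HC₁(ℤ_p[G]) = (G ⊗_ℤ ℤ_p[G]) / ⟨g ⊗ λg : g ∈ G, λ ∈ ℤ_p⟩`. -/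
def HC1 (p : ℕ) [Fact p.Prime] (G : Type) [CommGroup G] : Type :=
  (Additive G ⊗[ℤ] MonoidAlgebra ℤ_[p] G) ⧸
    AddSubgroup.closure
      {x : Additive G ⊗[ℤ] MonoidAlgebra ℤ_[p] G |
        ∃ (g : G) (l : ℤ_[p]), x = Additive.ofMul g ⊗ₜ[ℤ] (l • MonoidAlgebra.of ℤ_[p] G g)}

noncomputable instance (p : ℕ) [Fact p.Prime] (G : Type) [CommGroup G] : AddCommGroup (HC1 p G) :=
  inferInstanceAs (AddCommGroup ((Additive G ⊗[ℤ] MonoidAlgebra ℤ_[p] G) ⧸ _))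

/-!
Write `H̃₂(G)` additively and put `D_h(a) = a ⊗̃ (h - a)`, so that `ω₂(g ⊗ λh) = λ̄ · D_h(g)`.
Modulo the symmetric tensors the diagonal `a ↦ a ⊗ a` is additive, hence so is each `D_h`; and
`H̃₂(G)` is killed by the exponent `p ^ k`, so `λ ↦ λ̄ · y` is additive in `λ` as well. This gives
a homomorphism on `G ⊗ ℤ_p[G]`, which vanishes on `g ⊗ λg` because `D_g(g) = g ⊗̃ 0 = 0`.
It is onto since `a ⊗̃ b = D_{a+b}(a)` is the image of `a ⊗ (a + b)`.
-/

section ValNSMul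
variable {M : Type*} [AddCommGroup M] {n : ℕ} [NeZero n]

def ZMod.valNSMulHom (hM : ∀ y : M, n • y = 0) : ZMod n →+ M →+ M where
  toFun z := smulAddHom ℕ M z.val
  map_zero' := by simp
  map_add' a b := by
    ext y
    simp [ZMod.val_add, ← nsmul_eq_mod_nsmul _ (hM y), add_nsmul]

variable (hM : ∀ y : M, n • y = 0)

lemma ZMod.valNSMulHom_apply (z : ZMod n) (y : M) : ZMod.valNSMulHom hM z y = z.val • y := rfl

lemma ZMod.valNSMulHom_one (y : M) : ZMod.valNSMulHom hM 1 y = y := by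
  rw [ZMod.valNSMulHom_apply, ← Nat.cast_one, ZMod.val_natCast, ← nsmul_eq_mod_nsmul _ (hM y),
    one_nsmul]

end ValNSMul

lemma TensorProduct.exponent_nsmul_eq_zero {A M : Type*} [AddCommGroup A] [AddCommGroup M]
    (x : A ⊗[ℤ] M) : AddMonoid.exponent A • x = 0 := by
  induction x using TensorProduct.induction_on with
  | zero => exact smul_zero _
  | tmul a m => rw [smul_tmul', AddMonoid.exponent_nsmul_eq_zero, zero_tmul]
  | add x y hx hy => rw [smul_add, hx, hy, add_zero]

namespace Htilde2
variable {G : Type} [CommGroup G]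

noncomputable def mk : Additive G ⊗[ℤ] Additive G →+ Htilde2 G := QuotientAddGroup.mk' _

lemma mk_surjective : Function.Surjective (mk : _ → Htilde2 G) := QuotientAddGroup.mk'_surjective _

lemma exponent_nsmul_eq_zero (y : Htilde2 G) : Monoid.exponent G • y = 0 := by
  obtain ⟨x, rfl⟩ := mk_surjective y
  rw [← map_nsmul, ← AddMonoid.exponent_additive, TensorProduct.exponent_nsmul_eq_zero, map_zero]

lemma mk_tmul_add_tmul_comm (a b : Additive G) : mk (a ⊗ₜ[ℤ] b + b ⊗ₜ[ℤ] a) = 0 :=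
  (QuotientAddGroup.eq_zero_iff _).mpr (AddSubgroup.subset_closure ⟨a.toMul, b.toMul, rfl⟩)

noncomputable def tmulNegAddHom (h : G) : Additive G →+ Htilde2 G where
  toFun a := mk (a ⊗ₜ (-a + Additive.ofMul h))
  map_zero' := by rw [zero_tmul, map_zero]
  map_add' a b := by
    have : (a + b) ⊗ₜ[ℤ] (-(a + b) + Additive.ofMul h) =
        a ⊗ₜ (-a + Additive.ofMul h) + b ⊗ₜ (-b + Additive.ofMul h) - (a ⊗ₜ b + b ⊗ₜ a) := by
      simp only [add_tmul, tmul_add, tmul_neg]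
      abel
    rw [this, map_sub, mk_tmul_add_tmul_comm, sub_zero, map_add]

lemma tmulNegAddHom_apply (h : G) (a : Additive G) :
    tmulNegAddHom h a = mk (a ⊗ₜ (-a + Additive.ofMul h)) := rfl

lemma tmulNegAddHom_ofMul (g h : G) :
    tmulNegAddHom h (Additive.ofMul g) = mk (Additive.ofMul g ⊗ₜ Additive.ofMul (g⁻¹ * h)) := rfl

lemma tmulNegAddHom_ofMul_self (g : G) : tmulNegAddHom g (Additive.ofMul g) = 0 := by
  rw [tmulNegAddHom_apply, neg_add_cancel, tmul_zero, map_zero]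

lemma mk_tmul_eq_tmulNegAddHom (a b : Additive G) :
    mk (a ⊗ₜ b) = tmulNegAddHom (a + b).toMul a := by
  rw [tmulNegAddHom_apply, ofMul_toMul, neg_add_cancel_left]

end Htilde2

namespace HC1
open Htilde2
variable {p : ℕ} [Fact p.Prime] {G : Type} [CommGroup G] {k : ℕ} [NeZero (p ^ k)]
  (htor : ∀ y : Htilde2 G, p ^ k • y = 0)

noncomputable def omegaCurried : Additive G →+ MonoidAlgebra ℤ_[p] G →+ Htilde2 G where
  toFun a := (Finsupp.liftAddHom fun h =>
    ((ZMod.valNSMulHom htor).comp (PadicInt.toZModPow k).toAddMonoidHom).flip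
      (tmulNegAddHom h a)).comp MonoidAlgebra.coeffAddEquiv.toAddMonoidHom
  map_zero' := by
    ext
    simp
  map_add' a b := by
    ext
    simp

lemma omegaCurried_single (a : Additive G) (h : G) (l : ℤ_[p]) :
    omegaCurried htor a (MonoidAlgebra.single h l) =
      (PadicInt.toZModPow k l).val • tmulNegAddHom h a := by
  simp [omegaCurried, ZMod.valNSMulHom_apply]

noncomputable def omegaTensor : Additive G ⊗[ℤ] MonoidAlgebra ℤ_[p] G →+ Htilde2 G :=
  liftAddHom (omegaCurried htor) fun n a F => by
    rw [map_zsmul, AddMonoidHom.smul_apply, ← map_zsmul]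

lemma omegaTensor_tmul_single (a : Additive G) (h : G) (l : ℤ_[p]) :
    omegaTensor htor (a ⊗ₜ MonoidAlgebra.single h l) =
      (PadicInt.toZModPow k l).val • tmulNegAddHom h a := by
  rw [omegaTensor, liftAddHom_tmul, omegaCurried_single]

lemma closure_le_ker_omegaTensor :
    AddSubgroup.closure {x : Additive G ⊗[ℤ] MonoidAlgebra ℤ_[p] G |
      ∃ (g : G) (l : ℤ_[p]), x = Additive.ofMul g ⊗ₜ[ℤ] (l • MonoidAlgebra.of ℤ_[p] G g)} ≤
      (omegaTensor htor).ker := by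
  rw [AddSubgroup.closure_le]
  rintro _ ⟨g, l, rfl⟩
  rw [SetLike.mem_coe, AddMonoidHom.mem_ker, MonoidAlgebra.smul_of, omegaTensor_tmul_single,
    tmulNegAddHom_ofMul_self, smul_zero]

noncomputable def omega : HC1 p G →+ Htilde2 G :=
  QuotientAddGroup.lift _ (omegaTensor htor) (closure_le_ker_omegaTensor htor)

lemma omega_mk_tmul_single (a : Additive G) (h : G) (l : ℤ_[p]) :
    omega htor (QuotientAddGroup.mk (a ⊗ₜ MonoidAlgebra.single h l)) =
      (PadicInt.toZModPow k l).val • tmulNegAddHom h a :=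
  omegaTensor_tmul_single htor a h l

lemma omega_surjective : Function.Surjective (omega htor) := by
  have tmul_mem (a b : Additive G) : Htilde2.mk (a ⊗ₜ b) ∈ (omega htor).range :=
    ⟨QuotientAddGroup.mk (a ⊗ₜ MonoidAlgebra.single (a + b).toMul 1), by
      rw [omega_mk_tmul_single, map_one, ← ZMod.valNSMulHom_apply htor, ZMod.valNSMulHom_one,
        mk_tmul_eq_tmulNegAddHom]⟩
  have mk_mem (x : Additive G ⊗[ℤ] Additive G) : Htilde2.mk x ∈ (omega htor).range := by
    induction x using TensorProduct.induction_on with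
    | zero => rw [map_zero]; exact zero_mem _
    | tmul a b => exact tmul_mem a b
    | add x y hx hy => rw [map_add]; exact add_mem hx hy
  intro y
  obtain ⟨x, rfl⟩ := mk_surjective y
  exact mk_mem x

end HC1

theorem stmt8_general (p : ℕ) [Fact p.Prime] (G : Type) [CommGroup G]
    (k : ℕ) (hexp : Monoid.exponent G = p ^ k) :
    ∃ ω : HC1 p G →+ Htilde2 G,
      Function.Surjective ω ∧
        ∀ (g h : G) (l : ℤ_[p]),
          ω (QuotientAddGroup.mk
              (Additive.ofMul g ⊗ₜ[ℤ] (l • MonoidAlgebra.of ℤ_[p] G h))) =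
            (PadicInt.toZModPow k l).val •
              (QuotientAddGroup.mk (Additive.ofMul g ⊗ₜ[ℤ] Additive.ofMul (g⁻¹ * h)) :
                Htilde2 G) := by
  have htor (y : Htilde2 G) : p ^ k • y = 0 := hexp ▸ Htilde2.exponent_nsmul_eq_zero y
  refine ⟨HC1.omega htor, HC1.omega_surjective htor, fun g h l => ?_⟩
  rw [MonoidAlgebra.smul_of, HC1.omega_mk_tmul_single, Htilde2.tmulNegAddHom_ofMul]
  rfl

/-- The map `ω₂ : HC₁(ℤ_p[G]) → H̃₂(G)` defined on generators by
`ω₂(g ⊗ λh) = λ̄ · (g ⊗̃ g⁻¹h)`, where `λ̄` is the reduction of `λ ∈ ℤ_p` modulo the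
exponent of `G`, is a well-defined surjective group homomorphism. -/
theorem stmt8 (p : ℕ) [Fact p.Prime] (G : Type) [CommGroup G] [Fintype G]
    (hG : IsPGroup p G) (k : ℕ) (hexp : Monoid.exponent G = p ^ k) :
    ∃ ω : HC1 p G →+ Htilde2 G,
      Function.Surjective ω ∧
        ∀ (g h : G) (l : ℤ_[p]),
          ω (QuotientAddGroup.mk
              (Additive.ofMul g ⊗ₜ[ℤ] (l • MonoidAlgebra.of ℤ_[p] G h))) =
            (PadicInt.toZModPow k l).val •
              (QuotientAddGroup.mk (Additive.ofMul g ⊗ₜ[ℤ] Additive.ofMul (g⁻¹ * h)) :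
                Htilde2 G) :=
  stmt8_general p G k hexp
end

section
/- With G a finite abelian p-group, f: G → Z_p[G] the linearization map f(∏gᵢ^{λᵢ}) = Σλᵢgᵢ, ε₂(g⊗̃h) = g⊗g·f(h) ∈ HC_1(Z_p[G]), and ω₂(g⊗λh) = λ·(g ⊗̃ g^{-1}h) ∈ H̃_2(G), the composition ω₂ ∘ ε₂ is the identity on H̃_2(G); hence ε₂ is a section of ω₂ and the short exact sequence 0 → ker(ω₂) → HC_1(Z_p[G]) → H̃_2(G) → 0 splits. -/
open TensorProduct

/-! ε₂ sends `g ⊗̃ h` to `∑ᵢ eᵢ(h) · (g ⊗ g bᵢ)`, and ω₂ sends each summand back to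
`eᵢ(h) · (g ⊗̃ bᵢ)`: the `ℤ_p`-coefficient only enters through its residue mod `p^k`,
which acts on `H̃₂(G)` like the integer `eᵢ(h)` because `p^k` is the exponent of `G`. The sum is
`g ⊗̃ ∏ᵢ bᵢ^{eᵢ(h)} = g ⊗̃ h`, and the classes `g ⊗̃ h` generate `H̃₂(G)`. -/

lemma pow_val_intCast_eq_zpow {G : Type*} [Group G] {n : ℕ} [NeZero n]
    (hn : Monoid.exponent G ∣ n) (g : G) (c : ℤ) : g ^ (c : ZMod n).val = g ^ c := by
  rw [← zpow_natCast, zpow_eq_zpow_iff_modEq, ZMod.val_intCast]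
  exact (Int.mod_modEq c n).of_dvd
    (Int.natCast_dvd_natCast.2 ((Monoid.order_dvd_exponent g).trans hn))

namespace Htilde2

variable {G : Type} [CommGroup G]

/-- The class `g ⊗̃ h` of `g ⊗ h`. -/
def tmul (g h : G) : Htilde2 G :=
  QuotientAddGroup.mk (Additive.ofMul g ⊗ₜ[ℤ] Additive.ofMul h)

lemma nsmul_tmul (n : ℕ) (g h : G) : n • tmul g h = tmul g (h ^ n) :=
  (QuotientAddGroup.mk_nsmul _ _ _).symm.trans (congrArg QuotientAddGroup.mk (tmul_smul ..).symm)

lemma sum_tmul {ι : Type*} (s : Finset ι) (g : G) (x : ι → G) :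
    ∑ i ∈ s, tmul g (x i) = tmul g (∏ i ∈ s, x i) := by
  unfold tmul
  rw [ofMul_prod, TensorProduct.tmul_sum]
  exact (QuotientAddGroup.mk_sum ..).symm

lemma addMonoidHom_ext {A : Type*} [AddMonoid A] {φ ψ : Htilde2 G →+ A}
    (h : ∀ a b : G, φ (tmul a b) = ψ (tmul a b)) : φ = ψ := by
  refine QuotientAddGroup.addMonoidHom_ext _ (AddMonoidHom.ext fun x => ?_)
  induction x using TensorProduct.induction_on with
  | zero => simp only [map_zero]
  | tmul a b => exact h a.toMul b.toMul
  | add x y hx hy => simp only [map_add, hx, hy]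

end Htilde2

namespace HC1

variable {p : ℕ} [Fact p.Prime] {G : Type} [CommGroup G]

noncomputable def tmul (g : G) (x : MonoidAlgebra ℤ_[p] G) : HC1 p G :=
  QuotientAddGroup.mk (Additive.ofMul g ⊗ₜ[ℤ] x)

lemma tmul_sum {ι : Type*} (s : Finset ι) (g : G) (x : ι → MonoidAlgebra ℤ_[p] G) :
    tmul g (∑ i ∈ s, x i) = ∑ i ∈ s, tmul g (x i) := by
  unfold tmul
  rw [TensorProduct.tmul_sum]
  exact QuotientAddGroup.mk_sum ..

end HC1

section SplittingMaps

variable {p : ℕ} [Fact p.Prime] {G : Type} [CommGroup G]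

lemma epsilon_tmul {ι : Type*} [Fintype ι] (b : ι → G) (e : G → ι → ℤ)
    {f : G → MonoidAlgebra ℤ_[p] G}
    (hf : ∀ g : G, f g = ∑ i, e g i • MonoidAlgebra.of ℤ_[p] G (b i))
    {ε : Htilde2 G →+ HC1 p G}
    (hε : ∀ g h : G,
      ε (QuotientAddGroup.mk (Additive.ofMul g ⊗ₜ[ℤ] Additive.ofMul h)) =
        QuotientAddGroup.mk
          (Additive.ofMul g ⊗ₜ[ℤ] (MonoidAlgebra.of ℤ_[p] G g * f h)))
    (g h : G) :
    ε (Htilde2.tmul g h) =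
      ∑ i, HC1.tmul g ((e h i : ℤ_[p]) • MonoidAlgebra.of ℤ_[p] G (g * b i)) := by
  refine (hε g h).trans ?_
  change HC1.tmul g (MonoidAlgebra.of ℤ_[p] G g * f h) = _
  rw [hf, Finset.mul_sum, HC1.tmul_sum]
  refine Finset.sum_congr rfl fun i _ => ?_
  rw [mul_smul_comm, ← map_mul, Int.cast_smul_eq_zsmul]

lemma omega_tmul_intCast_smul {k : ℕ} (hexp : Monoid.exponent G ∣ p ^ k)
    {ω : HC1 p G →+ Htilde2 G}
    (hω : ∀ (g h : G) (l : ℤ_[p]),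
      ω (QuotientAddGroup.mk
          (Additive.ofMul g ⊗ₜ[ℤ] (l • MonoidAlgebra.of ℤ_[p] G h))) =
        (PadicInt.toZModPow k l).val •
          (QuotientAddGroup.mk (Additive.ofMul g ⊗ₜ[ℤ] Additive.ofMul (g⁻¹ * h)) :
            Htilde2 G))
    (g h : G) (c : ℤ) :
    ω (HC1.tmul g ((c : ℤ_[p]) • MonoidAlgebra.of ℤ_[p] G (g * h))) =
      Htilde2.tmul g (h ^ c) := by
  refine (hω g (g * h) c).trans ?_
  change (PadicInt.toZModPow k (c : ℤ_[p])).val • Htilde2.tmul g (g⁻¹ * (g * h)) = _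
  rw [map_intCast, inv_mul_cancel_left, Htilde2.nsmul_tmul, pow_val_intCast_eq_zpow hexp]

end SplittingMaps

theorem stmt9_general (p : ℕ) [Fact p.Prime] (G : Type) [CommGroup G]
    (k : ℕ) (hexp : Monoid.exponent G = p ^ k)
    (ι : Type) [Fintype ι] (b : ι → G) (e : G → ι → ℤ)
    (hdecomp : ∀ g : G, g = ∏ i, b i ^ e g i)
    (f : G → MonoidAlgebra ℤ_[p] G)
    (hf : ∀ g : G, f g = ∑ i, e g i • MonoidAlgebra.of ℤ_[p] G (b i))
    (ε : Htilde2 G →+ HC1 p G)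
    (hε : ∀ g h : G,
      ε (QuotientAddGroup.mk (Additive.ofMul g ⊗ₜ[ℤ] Additive.ofMul h)) =
        QuotientAddGroup.mk
          (Additive.ofMul g ⊗ₜ[ℤ] (MonoidAlgebra.of ℤ_[p] G g * f h)))
    (ω : HC1 p G →+ Htilde2 G)
    (hω : ∀ (g h : G) (l : ℤ_[p]),
      ω (QuotientAddGroup.mk
          (Additive.ofMul g ⊗ₜ[ℤ] (l • MonoidAlgebra.of ℤ_[p] G h))) =
        (PadicInt.toZModPow k l).val •
          (QuotientAddGroup.mk (Additive.ofMul g ⊗ₜ[ℤ] Additive.ofMul (g⁻¹ * h)) :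
            Htilde2 G)) :
    ω.comp ε = AddMonoidHom.id (Htilde2 G) ∧ Function.RightInverse ε ω := by
  have hcomp : ω.comp ε = AddMonoidHom.id (Htilde2 G) := by
    refine Htilde2.addMonoidHom_ext fun g h => ?_
    rw [AddMonoidHom.comp_apply, epsilon_tmul b e hf hε, map_sum]
    simp only [omega_tmul_intCast_smul hexp.dvd hω]
    rw [Htilde2.sum_tmul, ← hdecomp h, AddMonoidHom.id_apply]
  exact ⟨hcomp, DFunLike.congr_fun hcomp⟩

/-- With `f` the linearization map, `ε₂(g ⊗̃ h) = g ⊗ g·f(h)` and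
`ω₂(g ⊗ λh) = λ̄·(g ⊗̃ g⁻¹h)`, the composition `ω₂ ∘ ε₂` is the identity on `H̃₂(G)`;
hence `ε₂` is a section of `ω₂` and the short exact sequence
`0 → ker ω₂ → HC₁(ℤ_p[G]) → H̃₂(G) → 0` splits. -/
theorem stmt9 (p : ℕ) [Fact p.Prime] (G : Type) [CommGroup G] [Fintype G]
    (hG : IsPGroup p G) (k : ℕ) (hexp : Monoid.exponent G = p ^ k)
    (ι : Type) [Fintype ι] (b : ι → G) (e : G → ι → ℤ)
    (hdecomp : ∀ g : G, g = ∏ i, b i ^ e g i)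
    (f : G → MonoidAlgebra ℤ_[p] G)
    (hf : ∀ g : G, f g = ∑ i, e g i • MonoidAlgebra.of ℤ_[p] G (b i))
    (hf1 : f 1 = 0)
    (ε : Htilde2 G →+ HC1 p G)
    (hε : ∀ g h : G,
      ε (QuotientAddGroup.mk (Additive.ofMul g ⊗ₜ[ℤ] Additive.ofMul h)) =
        QuotientAddGroup.mk
          (Additive.ofMul g ⊗ₜ[ℤ] (MonoidAlgebra.of ℤ_[p] G g * f h)))
    (ω : HC1 p G →+ Htilde2 G)
    (hω : ∀ (g h : G) (l : ℤ_[p]),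
      ω (QuotientAddGroup.mk
          (Additive.ofMul g ⊗ₜ[ℤ] (l • MonoidAlgebra.of ℤ_[p] G h))) =
        (PadicInt.toZModPow k l).val •
          (QuotientAddGroup.mk (Additive.ofMul g ⊗ₜ[ℤ] Additive.ofMul (g⁻¹ * h)) :
            Htilde2 G)) :
    ω.comp ε = AddMonoidHom.id (Htilde2 G) ∧ Function.RightInverse ε ω :=
  stmt9_general p G k hexp ι b e hdecomp f hf ε hε ω hω
end

section
/- Let p be a prime, n ≥ 1, s ≥ 2. Then the two finite abelian groups Z/p^{s-1} ⊗_Z (⊕_{g ∈ C_{p^n}} C_{p^n}/⟨g⟩) and Z/p^{s-1} ⊗_Z (⊕_{i=2}^{p^n} Z/i) are isomorphic. -/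
/-!
Tensoring with `ℤ/a` turns `ℤ/b` into `ℤ/gcd(a, b)`, and `C_{p^n}/⟨g⟩ ≅ ℤ/gcd(p^n, g)`. So both
sides are direct sums of cyclic groups: `ℤ/gcd(p^{s-1}, gcd(p^n, g))` over `g ∈ ℤ/p^n` on the left,
`ℤ/gcd(p^{s-1}, i)` over `2 ≤ i ≤ p^n` on the right. For `1 ≤ i ≤ p^n` the power of `p` dividing
`i` also divides `p^n`, so the two gcds agree under `i ↦ i mod p^n`, and the remaining summand
`g = 1` is trivial.
-/

open TensorProduct DirectSum
open scoped Pointwise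

theorem Nat.Prime.gcd_pow_gcd_pow_of_le {p : ℕ} (hp : p.Prime) (α n : ℕ) {x : ℕ} (hx : 0 < x)
    (hxn : x ≤ p ^ n) : Nat.gcd (p ^ α) (Nat.gcd (p ^ n) x) = Nat.gcd (p ^ α) x := by
  rw [Nat.gcd_comm (p ^ n), ← Nat.gcd_assoc, Nat.gcd_eq_left_iff_dvd]
  obtain ⟨i, -, hi⟩ := (Nat.dvd_prime_pow hp).mp (Nat.gcd_dvd_left (p ^ α) x)
  have hdvd : p ^ i ∣ x := hi ▸ Nat.gcd_dvd_right _ _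
  have hle : p ^ i ≤ p ^ n := (Nat.le_of_dvd hx hdvd).trans hxn
  rw [hi]
  exact pow_dvd_pow p ((Nat.pow_le_pow_iff_right hp.one_lt).mp hle)

namespace ZMod

theorem gcd_val_natCast (b x : ℕ) : Nat.gcd b (x : ZMod b).val = Nat.gcd b x := by
  rw [val_natCast, Nat.gcd_comm, ← Nat.gcd_rec]

noncomputable def quotientZMultiplesEquiv {b : ℕ} [NeZero b] (y : ZMod b) :
    (ZMod b ⧸ AddSubgroup.zmultiples y) ≃+ ZMod (Nat.gcd b y.val) := by
  have : IsAddCyclic (ZMod b ⧸ AddSubgroup.zmultiples y) :=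
    isAddCyclic_of_surjective _ (QuotientAddGroup.mk'_surjective _)
  refine addEquivOfAddCyclicCardEq ?_
  have hd : Nat.gcd b y.val ∣ b := Nat.gcd_dvd_left _ _
  have horder : addOrderOf y = b / Nat.gcd b y.val := by
    simpa using addOrderOf_coe y.val (NeZero.ne b)
  have h := AddSubgroup.index_mul_card (AddSubgroup.zmultiples y)
  rw [Nat.card_zmultiples, horder, Nat.card_zmod] at h
  rw [Nat.card_zmod, ← AddSubgroup.index_eq_card, Nat.eq_div_of_mul_eq_left ?_ h,
    Nat.div_div_self hd (NeZero.ne b)]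
  exact (Nat.div_ne_zero_iff_of_dvd hd).mpr ⟨NeZero.ne b, Nat.gcd_ne_zero_left (NeZero.ne b)⟩

theorem toAddSubgroup_natCast_smul_top (a b : ℕ) :
    ((a : ℤ) • ⊤ : Submodule ℤ (ZMod b)).toAddSubgroup = AddSubgroup.zmultiples (a : ZMod b) := by
  ext x
  simp only [Submodule.mem_toAddSubgroup, Submodule.mem_smul_pointwise_iff_exists,
    Submodule.mem_top, true_and, AddSubgroup.mem_zmultiples_iff, zsmul_eq_mul, Int.cast_natCast]
  constructor
  · rintro ⟨y, rfl⟩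
    exact ⟨y.cast, by simp [mul_comm]⟩
  · rintro ⟨k, rfl⟩
    exact ⟨k, mul_comm _ _⟩

/-- `ℤ/a ⊗ ℤ/b ≅ (ℤ/b)/a(ℤ/b)`, a quotient of a cyclic group by a cyclic subgroup. -/
noncomputable def tensorEquivGcd (a b : ℕ) [NeZero b] :
    ZMod a ⊗[ℤ] ZMod b ≃+ ZMod (Nat.gcd a b) :=
  ((TensorProduct.congr (Int.quotientSpanNatEquivZMod a).symm.toAddEquiv.toIntLinearEquiv
      (LinearEquiv.refl ℤ _)).trans
      (QuotSMulTop.equivQuotTensor (a : ℤ) (ZMod b)).symm).toAddEquiv.trans <|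
    (QuotientAddGroup.quotientAddEquivOfEq (toAddSubgroup_natCast_smul_top a b)).trans <|
      (quotientZMultiplesEquiv (a : ZMod b)).trans <|
        (ringEquivCongr (by rw [gcd_val_natCast, Nat.gcd_comm])).toAddEquiv

noncomputable def tensorDirectSumEquiv {ι : Type*} [DecidableEq ι] (a : ℕ) (b : ι → ℕ)
    [∀ i, NeZero (b i)] :
    ZMod a ⊗[ℤ] (⨁ i, ZMod (b i)) ≃+ ⨁ i, ZMod (Nat.gcd a (b i)) :=
  (TensorProduct.directSumRight ℤ ℤ (ZMod a) fun i => ZMod (b i)).toAddEquiv.trans <|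
    DFinsupp.mapRange.addEquiv fun i => tensorEquivGcd a (b i)

/-- Given by its explicit formula, so that `optionFinEquiv k (some j)` is definitionally
`((j + 2 : ℕ) : ZMod (k + 1))`. -/
noncomputable def optionFinEquiv (k : ℕ) : Option (Fin k) ≃ ZMod (k + 1) :=
  Equiv.ofBijective (fun x => x.elim 1 fun j => ((j + 2 : ℕ) : ZMod (k + 1))) <| by
    let e : Option (Fin k) ≃ ZMod (k + 1) :=
      (finSuccEquiv k).symm.trans ((finEquiv (k + 1)).toEquiv.trans (Equiv.addRight 1))
    suffices h : (fun x => x.elim 1 fun j => ((j + 2 : ℕ) : ZMod (k + 1))) = e from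
      h ▸ e.bijective
    funext x
    cases x with
    | none => exact (zero_add 1).symm
    | some j =>
      show ((j + 2 : ℕ) : ZMod (k + 1)) = finEquiv (k + 1) j.succ + 1
      rw [← natCast_zmod_val (finEquiv (k + 1) j.succ)]
      show ((j + 2 : ℕ) : ZMod (k + 1)) = ((j + 1 : ℕ) : ZMod (k + 1)) + 1
      push_cast
      ring

end ZMod

namespace DirectSum

variable {ι κ : Type*} {M : ι → Type*} {N : κ → Type*} [∀ i, AddCommMonoid (M i)]
  [∀ k, AddCommMonoid (N k)]

noncomputable def addEquivCongr (e : ι ≃ κ) (φ : ∀ i, M i ≃+ N (e i)) :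
    (⨁ i, M i) ≃+ ⨁ k, N k :=
  (DFinsupp.mapRange.addEquiv φ).trans (equivCongrLeft e.symm).symm

noncomputable def optionEquivOfSubsingleton {M : Option ι → Type*} [∀ i, AddCommMonoid (M i)]
    [Subsingleton (M none)] : (⨁ i, M i) ≃+ ⨁ i, M (some i) :=
  letI : Unique (M none) := uniqueOfSubsingleton 0
  addEquivProdDirectSum.trans AddEquiv.uniqueProd

variable (k : ℕ) {M : ZMod (k + 1) → Type*} [∀ g, AddCommMonoid (M g)]

noncomputable def finEquivOfSubsingletonOne [Subsingleton (M 1)] :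
    (⨁ g, M g) ≃+ ⨁ j : Fin k, M ((j + 2 : ℕ) : ZMod (k + 1)) :=
  haveI : Subsingleton (M (ZMod.optionFinEquiv k none)) := ‹Subsingleton (M 1)›
  (equivCongrLeft (ZMod.optionFinEquiv k).symm).trans <|
    optionEquivOfSubsingleton (M := fun x => M (ZMod.optionFinEquiv k x))

end DirectSum

theorem stmt11_general (p : ℕ) (hp : p.Prime) (n s : ℕ) :
    Nonempty
      ((ZMod (p ^ (s - 1)) ⊗[ℤ]
          ⨁ g : ZMod (p ^ n), ZMod (p ^ n) ⧸ AddSubgroup.zmultiples g) ≃+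
        (ZMod (p ^ (s - 1)) ⊗[ℤ] ⨁ j : Fin (p ^ n - 1), ZMod (j.val + 2))) := by
  obtain ⟨k, hk⟩ : ∃ k, p ^ n = k + 1 := Nat.exists_eq_add_one.mpr (pow_pos hp.pos n)
  have hgcd (j : Fin k) :
      Nat.gcd (p ^ (s - 1)) (Nat.gcd (k + 1) ((j + 2 : ℕ) : ZMod (k + 1)).val) =
        Nat.gcd (p ^ (s - 1)) (j + 2) := by
    rw [ZMod.gcd_val_natCast, ← hk]
    exact hp.gcd_pow_gcd_pow_of_le _ _ (by omega) (by omega)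
  rw [hk, Nat.add_sub_cancel]
  have (x : ℕ) : NeZero (Nat.gcd (k + 1) x) := ⟨Nat.gcd_ne_zero_left k.succ_ne_zero⟩
  have : Subsingleton (ZMod (Nat.gcd (p ^ (s - 1)) (Nat.gcd (k + 1) (1 : ZMod (k + 1)).val))) := by
    rw [ZMod.subsingleton_iff, ← Nat.cast_one (R := ZMod (k + 1)), ZMod.gcd_val_natCast]
    simp
  exact ⟨(LinearEquiv.lTensor _
      (DirectSum.addEquivCongr (Equiv.refl _) ZMod.quotientZMultiplesEquiv).toIntLinearEquiv)
    |>.toAddEquiv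
    |>.trans (ZMod.tensorDirectSumEquiv _ fun g : ZMod (k + 1) => Nat.gcd (k + 1) g.val)
    |>.trans (DirectSum.finEquivOfSubsingletonOne k)
    |>.trans (DirectSum.addEquivCongr (Equiv.refl _) fun j => (ZMod.ringEquivCongr (hgcd j)).toAddEquiv)
    |>.trans (ZMod.tensorDirectSumEquiv _ _).symm⟩

/-- For a prime `p`, `n ≥ 1` and `s ≥ 2`, the finite abelian groups
`ℤ/p^{s-1} ⊗_ℤ (⊕_{g ∈ C_{p^n}} C_{p^n}/⟨g⟩)` and `ℤ/p^{s-1} ⊗_ℤ (⊕_{i=2}^{p^n} ℤ/i)`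
are isomorphic. -/
theorem stmt11 (p : ℕ) (hp : p.Prime) (n s : ℕ) (hn : 1 ≤ n) (hs : 2 ≤ s) :
    Nonempty
      ((ZMod (p ^ (s - 1)) ⊗[ℤ]
          ⨁ g : ZMod (p ^ n), ZMod (p ^ n) ⧸ AddSubgroup.zmultiples g) ≃+
        (ZMod (p ^ (s - 1)) ⊗[ℤ] ⨁ j : Fin (p ^ n - 1), ZMod (j.val + 2))) :=
  stmt11_general p hp n s
end
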